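/- Let (E, *, cx) be a reduced oriented matroid whose ground set E = {a, a*, b, b*, c, c*} consists of six distinct elements. If c ∉ cx({a, a*, b, b*}), then every topal subset of E is a tope; in particular, (E, *, cx) has exactly 8 topes. -/
import Mathlib


/-- An oriented matroid on the type `E` with involution `star` and closure operator `cx`. -/
structure IsOrientedMatroid {E : Type*} (star : E → E) (cx : Set E → Set E) : Prop where
  star_star : ∀ x, star (star x) = x
  star_ne : ∀ x, star x ≠ x
  le_cx : ∀ X : Set E, X ⊆ cx X
  cx_mono : ∀ X Y : Set E, X ⊆ Y → cx X ⊆ cx Y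
  cx_idem : ∀ X : Set E, cx (cx X) = cx X
  cx_star : ∀ X : Set E, cx (star '' X) = star '' cx X
  exchange2 : ∀ (X : Set E) (x : E), x ∈ cx (X ∪ {star x}) → x ∈ cx X
  exchange3 : ∀ (X : Set E) (x y : E),
    x ∈ cx (X ∪ {star y}) → x ∉ cx X → y ∈ cx ((X \ {y}) ∪ {star x})
  finitary : ∀ (X : Set E) (x : E), x ∈ cx X → ∃ Y, Y ⊆ X ∧ Y.Finite ∧ x ∈ cx Y

/-- The oriented matroid is reduced. -/
def IsReducedOM {E : Type*} (cx : Set E → Set E) : Prop :=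
  cx ∅ = ∅ ∧ ∀ x : E, cx {x} = {x}

/-- A topal set contains exactly one of `x`, `star x` for each `x`. -/
def IsTopal {E : Type*} (star : E → E) (R : Set E) : Prop :=
  ∀ x : E, x ∈ R ↔ star x ∉ R

/-- A tope: a maximal `cx`-closed asymmetric subset. -/
def IsTope {E : Type*} (star : E → E) (cx : Set E → Set E) (R : Set E) : Prop :=
  cx R ⊆ R ∧ (∀ x ∈ R, star x ∉ R) ∧
    ∀ R' : Set E, cx R' ⊆ R' → (∀ x ∈ R', star x ∉ R') → R ⊆ R' → R' = R

set_option maxHeartbeats 2000000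

/-- in a reduced oriented matroid on six distinct elements
`{a, a*, b, b*, c, c*}` with `c ∉ cx {a, a*, b, b*}`, every topal subset is a tope,
and there are exactly 8 topes. -/
theorem six_elements_all_topal_are_topes {E : Type*} (star : E → E) (cx : Set E → Set E)
    (hom : IsOrientedMatroid star cx) (hred : IsReducedOM cx)
    (a b c : E)
    (hground : ∀ x : E, x = a ∨ x = star a ∨ x = b ∨ x = star b ∨ x = c ∨ x = star c)
    (hdistinct : [a, star a, b, star b, c, star c].Nodup)
    (hc : c ∉ cx {a, star a, b, star b}) :
    (∀ R : Set E, IsTopal star R → IsTope star cx R) ∧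
      {R : Set E | IsTope star cx R}.ncard = 8 := by
  classical
  obtain ⟨hred0, hred1⟩ := hred
  simp [List.nodup_cons] at hdistinct
  obtain ⟨⟨n1,n2,n3,n4,n5⟩, ⟨m1,m2,m3,m4⟩, ⟨k1,k2,k3⟩, ⟨l1,l2⟩, j1⟩ := hdistinct
  have pick : ∀ R : Set E, IsTopal star R → ∀ p : E,
      ∃ y, (y = p ∨ y = star p) ∧ y ∈ R ∧ star y ∉ R := by
    intro R hR p
    by_cases hp : p ∈ R
    · exact ⟨p, Or.inl rfl, hp, (hR p).mp hp⟩
    · refine ⟨star p, Or.inr rfl, ?_, ?_⟩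
      · by_contra h
        exact hp ((hR p).mpr h)
      · rw [hom.star_star]
        exact hp
  have hSstar : star '' ({a, star a, b, star b} : Set E) = {a, star a, b, star b} := by
    ext w
    simp only [Set.mem_image, Set.mem_insert_iff, Set.mem_singleton_iff]
    constructor
    · rintro ⟨v, hv, rfl⟩
      rcases hv with h|h|h|h <;> rw [h] <;> simp [hom.star_star]
    · rintro (h|h|h|h) <;> rw [h]
      exacts [⟨star a, by simp, hom.star_star a⟩, ⟨a, by simp, rfl⟩,
        ⟨star b, by simp, hom.star_star b⟩, ⟨b, by simp, rfl⟩]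
  have hc2 : star c ∉ cx ({a, star a, b, star b} : Set E) := by
    intro h
    apply hc
    have h1 : star (star c) ∈ star '' cx ({a, star a, b, star b} : Set E) := ⟨_, h, rfl⟩
    rw [← hom.cx_star, hSstar, hom.star_star] at h1
    exact h1
  have hcc : ∀ u : E, (u = c ∨ u = star c) → u ∉ cx ({a, star a, b, star b} : Set E) := by
    rintro u (h|h) <;> rw [h]
    exacts [hc, hc2]
  have hSc : ∀ y : E, (y = a ∨ y = star a ∨ y = b ∨ y = star b) →
      (y ≠ c ∧ y ≠ star c) := by
    rintro y (h|h|h|h) <;> rw [h]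
    exacts [⟨n4, n5⟩, ⟨m3, m4⟩, ⟨k2, k3⟩, ⟨l1, l2⟩]
  have hSmem : ∀ y : E, (y = a ∨ y = star a ∨ y = b ∨ y = star b) →
      y ∈ ({a, star a, b, star b} : Set E) := by
    rintro y (h|h|h|h) <;> rw [h] <;> simp
  have hSstarmem : ∀ y : E, (y = a ∨ y = star a ∨ y = b ∨ y = star b) →
      star y ∈ ({a, star a, b, star b} : Set E) := by
    rintro y (h|h|h|h) <;> rw [h] <;> simp [hom.star_star]
  -- key lemma 1
  have key1 : ∀ x y u : E, (x = a ∨ x = star a ∨ x = b ∨ x = star b) →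
      (y = a ∨ y = star a ∨ y = b ∨ y = star b) → x ≠ y → (u = c ∨ u = star c) →
      x ∉ cx ({y, u} : Set E) := by
    intro x y u hx hy hxy hu hmem
    have hcu : star u = c ∨ star u = star c := by
      rcases hu with h|h <;> rw [h]
      · exact Or.inr rfl
      · exact Or.inl (hom.star_star c)
    have hyu : ({y, u} : Set E) = {y} ∪ {star (star u)} := by
      rw [hom.star_star, Set.singleton_union]
    rw [hyu] at hmem
    have hnx : x ∉ cx ({y} : Set E) := by
      rw [hred1]
      simpa using hxy
    have h3 := hom.exchange3 {y} x (star u) hmem hnx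
    have hyne : star u ∉ ({y} : Set E) := by
      have hy2 := hSc y hy
      rcases hcu with h|h <;> rw [h] <;> simp
      · exact fun hh => hy2.1 hh.symm
      · exact fun hh => hy2.2 hh.symm
    rw [Set.diff_singleton_eq_self hyne, Set.singleton_union] at h3
    have hsub : ({y, star x} : Set E) ⊆ ({a, star a, b, star b} : Set E) := by
      intro w hw
      rcases hw with rfl|hw
      · exact hSmem _ hy
      · rw [Set.mem_singleton_iff] at hw
        rw [hw]
        exact hSstarmem _ hx
    exact hcc _ hcu (hom.cx_mono _ _ hsub h3)
  -- subpair helper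
  have subpair : ∀ (R : Set E), IsTopal star R → ∀ x p q : E, x ∉ R →
      (∀ w : E, w = x ∨ w = star x ∨ w = p ∨ w = star p ∨ w = q ∨ w = star q) →
      ∃ y z, (y = p ∨ y = star p) ∧ (z = q ∨ z = star q) ∧ R \ {star x} ⊆ {y, z} := by
    intro R hR x p q hx hg
    obtain ⟨y, hy1, hy2, hy3⟩ := pick R hR p
    obtain ⟨z, hz1, hz2, hz3⟩ := pick R hR q
    refine ⟨y, z, hy1, hz1, ?_⟩
    rintro w ⟨hwR, hwx⟩
    rw [Set.mem_singleton_iff] at hwx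
    rcases hg w with h|h|h|h|h|h <;> rw [h] at hwR ⊢
    · exact absurd hwR hx
    · exact absurd rfl (h ▸ hwx)
    · rcases hy1 with h'|h'
      · rw [← h']
        exact Set.mem_insert _ _
      · rw [h'] at hy3
        rw [hom.star_star] at hy3
        exact absurd hwR hy3
    · rcases hy1 with h'|h'
      · rw [h'] at hy3
        exact absurd hwR hy3
      · rw [← h']
        exact Set.mem_insert _ _
    · rcases hz1 with h'|h'
      · rw [← h']
        exact Set.mem_insert_of_mem _ (Set.mem_singleton _)
      · rw [h'] at hz3
        rw [hom.star_star] at hz3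
        exact absurd hwR hz3
    · rcases hz1 with h'|h'
      · rw [h'] at hz3
        exact absurd hwR hz3
      · rw [← h']
        exact Set.mem_insert_of_mem _ (Set.mem_singleton _)
  -- topal sets are closed
  have topal_closed : ∀ R : Set E, IsTopal star R → cx R ⊆ R := by
    intro R hR x hx
    by_contra hxR
    have hsx : star x ∈ R := by
      by_contra h
      exact hxR ((hR x).mpr h)
    have hXR : (R \ {star x}) ∪ {star x} = R :=
      Set.diff_union_of_subset (by simpa using hsx)
    rw [← hXR] at hx
    have hx2 : x ∈ cx (R \ {star x}) := hom.exchange2 _ x hx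
    rcases hground x with h|h|h|h|h|h <;> rw [h] at hx2 hxR
    · obtain ⟨y, z, hy, hz, hsub⟩ := subpair R hR a b c hxR (fun w => hground w)
      have hm : a ∈ cx ({y, z} : Set E) := hom.cx_mono _ _ hsub hx2
      have hya : a ≠ y := by
        rcases hy with h'|h' <;> rw [h']
        exacts [n2, n3]
      exact key1 a y z (Or.inl rfl) (by tauto) hya hz hm
    · obtain ⟨y, z, hy, hz, hsub⟩ := subpair R hR (star a) b c hxR
        (by intro w; have h' := hground w; rcases h' with h'|h'|h'|h'|h'|h' <;>
          simp [h', hom.star_star])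
      have hm : star a ∈ cx ({y, z} : Set E) := hom.cx_mono _ _ hsub hx2
      have hya : star a ≠ y := by
        rcases hy with h'|h' <;> rw [h']
        exacts [m1, m2]
      exact key1 (star a) y z (by tauto) (by tauto) hya hz hm
    · obtain ⟨y, z, hy, hz, hsub⟩ := subpair R hR b a c hxR
        (by intro w; have h' := hground w; tauto)
      have hm : b ∈ cx ({y, z} : Set E) := hom.cx_mono _ _ hsub hx2
      have hya : b ≠ y := by
        rcases hy with h'|h' <;> rw [h']
        exacts [fun hh => n2 hh.symm, fun hh => m1 hh.symm]
      exact key1 b y z (by tauto) (by tauto) hya hz hm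
    · obtain ⟨y, z, hy, hz, hsub⟩ := subpair R hR (star b) a c hxR
        (by intro w; have h' := hground w; rcases h' with h'|h'|h'|h'|h'|h' <;>
          simp [h', hom.star_star])
      have hm : star b ∈ cx ({y, z} : Set E) := hom.cx_mono _ _ hsub hx2
      have hya : star b ≠ y := by
        rcases hy with h'|h' <;> rw [h']
        exacts [fun hh => n3 hh.symm, fun hh => m2 hh.symm]
      exact key1 (star b) y z (by tauto) (by tauto) hya hz hm
    · obtain ⟨y, z, hy, hz, hsub⟩ := subpair R hR c a b hxR
        (by intro w; have h' := hground w; tauto)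
      have hsub2 : ({y, z} : Set E) ⊆ ({a, star a, b, star b} : Set E) := by
        intro w hw
        rcases hw with rfl|hw
        · exact hSmem _ (by tauto)
        · rw [Set.mem_singleton_iff] at hw
          rw [hw]
          exact hSmem _ (by tauto)
      exact hcc c (Or.inl rfl) (hom.cx_mono _ _ (hsub.trans hsub2) hx2)
    · obtain ⟨y, z, hy, hz, hsub⟩ := subpair R hR (star c) a b hxR
        (by intro w; have h' := hground w; rcases h' with h'|h'|h'|h'|h'|h' <;>
          simp [h', hom.star_star])
      have hsub2 : ({y, z} : Set E) ⊆ ({a, star a, b, star b} : Set E) := by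
        intro w hw
        rcases hw with rfl|hw
        · exact hSmem _ (by tauto)
        · rw [Set.mem_singleton_iff] at hw
          rw [hw]
          exact hSmem _ (by tauto)
      exact hcc (star c) (Or.inr rfl) (hom.cx_mono _ _ (hsub.trans hsub2) hx2)
  -- topal implies tope
  have topal_tope : ∀ R : Set E, IsTopal star R → IsTope star cx R := by
    intro R hR
    refine ⟨topal_closed R hR, fun x hx => (hR x).mp hx, ?_⟩
    intro R' _ hR'asym hsub
    ext w
    constructor
    · intro hw
      by_contra hwR
      have hswR : star w ∈ R := by
        by_contra h
        exact hwR ((hR w).mpr h)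
      have := hR'asym (star w) (hsub hswR)
      rw [hom.star_star] at this
      exact this hw
    · exact fun hw => hsub hw
  -- tope implies topal
  have tope_topal : ∀ R : Set E, IsTope star cx R → IsTopal star R := by
    intro R hR
    obtain ⟨hcl, hasym, hmax⟩ := hR
    have hTtopal : IsTopal star
        (R ∪ {w | star w ∉ R ∧ w ∉ R ∧ (w = a ∨ w = b ∨ w = c)}) := by
      intro x
      by_cases hx : x ∈ R
      · have hsx : star x ∉ R := hasym x hx
        constructor
        · rintro _ (h|⟨h1, -, -⟩)
          · exact hsx h
          · rw [hom.star_star] at h1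
            exact h1 hx
        · intro _
          exact Or.inl hx
      · by_cases hsx : star x ∈ R
        · constructor
          · rintro (h|⟨h1, -, -⟩)
            · exact absurd h hx
            · exact absurd hsx h1
          · intro hns
            exact absurd (Or.inl hsx) hns
        · have hsxx : star (star x) ∉ R := by
            rw [hom.star_star]
            exact hx
          have habc : (x = a ∨ x = b ∨ x = c) ∨ (star x = a ∨ star x = b ∨ star x = c) := by
            rcases hground x with h|h|h|h|h|h <;> rw [h]
            · tauto
            · rw [hom.star_star]; tauto
            · tauto
            · rw [hom.star_star]; tauto
            · tauto
            · rw [hom.star_star]; tauto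
          have hnot : ¬((x = a ∨ x = b ∨ x = c) ∧ (star x = a ∨ star x = b ∨ star x = c)) := by
            rintro ⟨h1, h2⟩
            rcases h1 with h|h|h <;> rw [h] at h2
            · rcases h2 with h'|h'|h'
              exacts [n1 h'.symm, m1 h', m3 h']
            · rcases h2 with h'|h'|h'
              exacts [n3 h'.symm, k1 h'.symm, l1 h']
            · rcases h2 with h'|h'|h'
              exacts [n5 h'.symm, k3 h'.symm, j1 h'.symm]
          constructor
          · rintro (h|⟨-, -, h3⟩)
            · exact absurd h hx
            rintro (h'|⟨-, -, h3'⟩)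
            · exact hsx h'
            · exact hnot ⟨h3, h3'⟩
          · intro h
            refine Or.inr ⟨hsx, hx, ?_⟩
            rcases habc with h1|h1
            · exact h1
            · exact absurd (Or.inr ⟨hsxx, hsx, h1⟩) h
    have hTR : (R ∪ {w | star w ∉ R ∧ w ∉ R ∧ (w = a ∨ w = b ∨ w = c)}) = R :=
      hmax _ (topal_closed _ hTtopal) (fun x hx => (hTtopal x).mp hx) Set.subset_union_left
    rw [← hTR]
    exact hTtopal
  refine ⟨topal_tope, ?_⟩
  -- counting
  have topal3 : ∀ p q r : E,
      (∀ w : E, w = p ∨ w = star p ∨ w = q ∨ w = star q ∨ w = r ∨ w = star r) →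
      star p ≠ q → star p ≠ r → star q ≠ r → IsTopal star ({p, q, r} : Set E) := by
    intro p q r hg h1 h2 h3
    have npq : star q ≠ p := fun h => h1 (by rw [← h, hom.star_star])
    have nrp : star r ≠ p := fun h => h2 (by rw [← h, hom.star_star])
    have nrq : star r ≠ q := fun h => h3 (by rw [← h, hom.star_star])
    have e1 : star p ∉ ({p, q, r} : Set E) := by
      simp only [Set.mem_insert_iff, Set.mem_singleton_iff]
      push_neg
      exact ⟨hom.star_ne p, h1, h2⟩
    have e2 : star q ∉ ({p, q, r} : Set E) := by
      simp only [Set.mem_insert_iff, Set.mem_singleton_iff]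
      push_neg
      exact ⟨npq, hom.star_ne q, h3⟩
    have e3 : star r ∉ ({p, q, r} : Set E) := by
      simp only [Set.mem_insert_iff, Set.mem_singleton_iff]
      push_neg
      exact ⟨nrp, nrq, hom.star_ne r⟩
    intro x
    rcases hg x with h|h|h|h|h|h <;> rw [h]
    · exact iff_of_true (Set.mem_insert _ _) e1
    · refine iff_of_false e1 ?_
      rw [hom.star_star]
      simp
    · exact iff_of_true (by simp) e2
    · refine iff_of_false e2 ?_
      rw [hom.star_star]
      simp
    · exact iff_of_true (by simp) e3
    · refine iff_of_false e3 ?_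
      rw [hom.star_star]
      simp
  have hset : {R : Set E | IsTope star cx R} = {R : Set E | IsTopal star R} := by
    ext R
    exact ⟨fun h => tope_topal R h, fun h => topal_tope R h⟩
  have hrange : {R : Set E | IsTopal star R} = Set.range
      (fun s : Bool × Bool × Bool =>
        ({cond s.1 a (star a), cond s.2.1 b (star b), cond s.2.2 c (star c)} : Set E)) := by
    ext R
    simp only [Set.mem_setOf_eq, Set.mem_range]
    constructor
    · intro hR
      obtain ⟨y, hy, hyR, hy'⟩ := pick R hR a
      obtain ⟨z, hz, hzR, hz'⟩ := pick R hR b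
      obtain ⟨w, hw, hwR, hw'⟩ := pick R hR c
      have hReq : R = {y, z, w} := by
        apply Set.Subset.antisymm
        · intro v hv
          rcases hground v with h|h|h|h|h|h <;> rw [h] at hv ⊢
          · rcases hy with h'|h'
            · rw [← h']
              exact Set.mem_insert _ _
            · rw [h', hom.star_star] at hy'
              exact absurd hv hy'
          · rcases hy with h'|h'
            · rw [h'] at hy'
              exact absurd hv hy'
            · rw [← h']
              exact Set.mem_insert _ _
          · rcases hz with h'|h'
            · rw [← h']
              exact Set.mem_insert_of_mem _ (Set.mem_insert _ _)
            · rw [h', hom.star_star] at hz'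
              exact absurd hv hz'
          · rcases hz with h'|h'
            · rw [h'] at hz'
              exact absurd hv hz'
            · rw [← h']
              exact Set.mem_insert_of_mem _ (Set.mem_insert _ _)
          · rcases hw with h'|h'
            · rw [← h']
              exact Set.mem_insert_of_mem _ (Set.mem_insert_of_mem _ (Set.mem_singleton _))
            · rw [h', hom.star_star] at hw'
              exact absurd hv hw'
          · rcases hw with h'|h'
            · rw [h'] at hw'
              exact absurd hv hw'
            · rw [← h']
              exact Set.mem_insert_of_mem _ (Set.mem_insert_of_mem _ (Set.mem_singleton _))
        · intro v hv
          simp only [Set.mem_insert_iff, Set.mem_singleton_iff] at hv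
          rcases hv with h'|h'|h' <;> rw [h']
          exacts [hyR, hzR, hwR]
      rcases hy with h|h <;> rcases hz with h'|h' <;> rcases hw with h''|h'' <;>
        rw [h, h', h''] at hReq
      exacts [⟨(true, true, true), hReq.symm⟩, ⟨(true, true, false), hReq.symm⟩,
        ⟨(true, false, true), hReq.symm⟩, ⟨(true, false, false), hReq.symm⟩,
        ⟨(false, true, true), hReq.symm⟩, ⟨(false, true, false), hReq.symm⟩,
        ⟨(false, false, true), hReq.symm⟩, ⟨(false, false, false), hReq.symm⟩]
    · rintro ⟨⟨s1, s2, s3⟩, hs⟩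
      rw [← hs]
      have ssk2 : star (star b) ≠ c := by rw [hom.star_star]; exact k2
      have ssk3 : star (star b) ≠ star c := by rw [hom.star_star]; exact k3
      have ssn2 : star (star a) ≠ b := by rw [hom.star_star]; exact n2
      have ssn3 : star (star a) ≠ star b := by rw [hom.star_star]; exact n3
      have ssn4 : star (star a) ≠ c := by rw [hom.star_star]; exact n4
      have ssn5 : star (star a) ≠ star c := by rw [hom.star_star]; exact n5
      cases s1 <;> cases s2 <;> cases s3
      · exact topal3 (star a) (star b) (star c)
          (by intro w; have h' := hground w; rcases h' with h'|h'|h'|h'|h'|h' <;>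
            simp [h', hom.star_star]) ssn3 ssn5 ssk3
      · exact topal3 (star a) (star b) c
          (by intro w; have h' := hground w; rcases h' with h'|h'|h'|h'|h'|h' <;>
            simp [h', hom.star_star]) ssn3 ssn4 ssk2
      · exact topal3 (star a) b (star c)
          (by intro w; have h' := hground w; rcases h' with h'|h'|h'|h'|h'|h' <;>
            simp [h', hom.star_star]) ssn2 ssn5 l2
      · exact topal3 (star a) b c
          (by intro w; have h' := hground w; rcases h' with h'|h'|h'|h'|h'|h' <;>
            simp [h', hom.star_star]) ssn2 ssn4 l1
      · exact topal3 a (star b) (star c)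
          (by intro w; have h' := hground w; rcases h' with h'|h'|h'|h'|h'|h' <;>
            simp [h', hom.star_star]) m2 m4 ssk3
      · exact topal3 a (star b) c
          (by intro w; have h' := hground w; rcases h' with h'|h'|h'|h'|h'|h' <;>
            simp [h', hom.star_star]) m2 m3 ssk2
      · exact topal3 a b (star c)
          (by intro w; have h' := hground w; rcases h' with h'|h'|h'|h'|h'|h' <;>
            simp [h', hom.star_star]) m1 m4 l2
      · exact topal3 a b c hground m1 m3 l1
  have hginj : Function.Injective
      (fun s : Bool × Bool × Bool =>
        ({cond s.1 a (star a), cond s.2.1 b (star b), cond s.2.2 c (star c)} : Set E)) := by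
    have hmem : ∀ u : Bool × Bool × Bool,
        (a ∈ ({cond u.1 a (star a), cond u.2.1 b (star b), cond u.2.2 c (star c)} : Set E)
          ↔ u.1 = true) ∧
        (b ∈ ({cond u.1 a (star a), cond u.2.1 b (star b), cond u.2.2 c (star c)} : Set E)
          ↔ u.2.1 = true) ∧
        (c ∈ ({cond u.1 a (star a), cond u.2.1 b (star b), cond u.2.2 c (star c)} : Set E)
          ↔ u.2.2 = true) := by
      rintro ⟨u1, u2, u3⟩
      cases u1 <;> cases u2 <;> cases u3 <;>
        simp [n1, n2, n3, n4, n5, m1, m3, k1, k2, k3, l1, j1,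
          Ne.symm n2, Ne.symm m1, Ne.symm n4, Ne.symm m3, Ne.symm k2, Ne.symm l1]
    intro s t hst
    obtain ⟨ha1, hb1, hc1⟩ := hmem s
    obtain ⟨ha2, hb2, hc2⟩ := hmem t
    simp only at hst
    rw [hst] at ha1 hb1 hc1
    obtain ⟨s1, s2, s3⟩ := s
    obtain ⟨t1, t2, t3⟩ := t
    have e1 : s1 = t1 := by
      have := ha1.symm.trans ha2
      simp only at this
      cases s1 <;> cases t1 <;> simp_all
    have e2 : s2 = t2 := by
      have := hb1.symm.trans hb2
      simp only at this
      cases s2 <;> cases t2 <;> simp_all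
    have e3 : s3 = t3 := by
      have := hc1.symm.trans hc2
      simp only at this
      cases s3 <;> cases t3 <;> simp_all
    simp [e1, e2, e3]
  rw [hset, hrange, ← Set.image_univ, Set.ncard_image_of_injective _ hginj, Set.ncard_univ]
  simp [Nat.card_eq_fintype_card]
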